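/- arXiv:2111.06170 — 2 statements merged into one kernel-verified Lean document; each statement's English description precedes it below -/
import Mathlib

section
/- With the Syracuse map S and sequences a_i(N), R_i(N) as defined, for any vector a ∈ ℕ^k (with all a_i ≥ 1) and any vector R ∈ {r(1),...,r(p-1)}^{k+1}, the set E_k(a,R) = {N ∈ ℕ \ pℕ : (a_1(N),...,a_k(N)) = a and (R_1(N),...,R_{k+1}(N)) = R} is exactly one residue class modulo p^{|a|+1}, where |a| = a_1 + ... + a_k. -/
/-!
Induction on `k`. A number `N` lies in `E_{k+1}(a, R)` iff `N ≡ j (mod p)` where `R_1 = r(j)`,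
`ν_p(qN + r(j)) = a_1`, and `S N = (qN + r(j)) / p^{a_1}` lies in the set `E_k` of the shifted
vectors, which by induction is a residue class `M₀ mod p^{|a| - a_1 + 1}` with `p ∤ M₀`.
The middle two conditions together say exactly `qN + r(j) ≡ p^{a_1} M₀ (mod p^{|a|+1})`.
As `q` is invertible modulo `p^{|a|+1}`, this is a single residue class of `N`, and since
`a_1 ≥ 1` it already forces `qN + r(j) ≡ 0 ≡ qj + r(j) (mod p)`, i.e. `N ≡ j (mod p)`.
-/

open Finset

namespace Nat

theorem divMaxPow_eq_div_pow_padicValNat {p : ℕ} (hp : p ≠ 0) (n : ℕ) :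
    n.divMaxPow p = n / p ^ padicValNat p n :=
  (Nat.div_eq_of_eq_mul_right (by positivity) (pow_padicValNat_mul_divMaxPow p n).symm).symm

theorem padicValNat_eq_and_divMaxPow_modEq_iff {p n a s M : ℕ} (hp : 1 < p) (hn : n ≠ 0)
    (hs : s ≠ 0) (hM : ¬p ∣ M) :
    (padicValNat p n = a ∧ n.divMaxPow p ≡ M [MOD p ^ s]) ↔ n ≡ p ^ a * M [MOD p ^ (a + s)] := by
  rw [pow_add]
  constructor
  · rintro ⟨rfl, h⟩
    simpa only [pow_padicValNat_mul_divMaxPow] using h.mul_left' (p ^ padicValNat p n)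
  · intro h
    obtain ⟨d, rfl⟩ : p ^ a ∣ n :=
      (h.dvd_iff (dvd_mul_right _ _)).mpr (dvd_mul_right _ _)
    have hd : d ≡ M [MOD p ^ s] := Nat.ModEq.mul_left_cancel' (by positivity) h
    have hdiv := maxPowDvdDiv_of_pow_mul_eq hn rfl
      fun hpd => hM ((hd.dvd_iff (dvd_pow_self p hs)).mp hpd)
    have hval : (p ^ a * d).divMaxPow p = d := congrArg Prod.snd hdiv
    exact ⟨congrArg Prod.fst hdiv, by rwa [hval]⟩

end Nat

section Syracuse

variable {p q : ℕ} {r : ℕ → ℤ}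

def syracuseNum (p q : ℕ) (r : ℕ → ℤ) (N : ℕ) : ℕ := ((q * N : ℤ) + r (N % p)).toNat

def syracuse (p q : ℕ) (r : ℕ → ℤ) (N : ℕ) : ℕ := (syracuseNum p q r N).divMaxPow p

/-- The set `E_k(av, Rv)`, with the paper's indices `1, …, k` shifted to `0, …, k - 1`. -/
def syracuseCylinder (p q : ℕ) (r : ℕ → ℤ) (k : ℕ) (av : ℕ → ℕ) (Rv : ℕ → ℤ) : Set ℕ :=
  {N | ¬p ∣ N ∧ (∀ i < k, padicValNat p (syracuseNum p q r ((syracuse p q r)^[i] N)) = av i) ∧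
    ∀ i < k + 1, r ((syracuse p q r)^[i] N % p) = Rv i}

theorem one_le_mul_add_r (hp : 0 < p) (hr1 : ∀ j, 1 ≤ j → j < p → 1 ≤ q * j + r j)
    {N : ℕ} (hN : ¬p ∣ N) : 1 ≤ (q * N : ℤ) + r (N % p) := by
  have hmod := hr1 (N % p) (Nat.pos_of_ne_zero fun h => hN (Nat.dvd_of_mod_eq_zero h))
    (Nat.mod_lt N hp)
  have hle : (q : ℤ) * (N % p : ℕ) ≤ q * N := by gcongr; exact_mod_cast Nat.mod_le N p
  linarith

theorem syracuseNum_cast (hp : 0 < p) (hr1 : ∀ j, 1 ≤ j → j < p → 1 ≤ q * j + r j)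
    {N : ℕ} (hN : ¬p ∣ N) : (syracuseNum p q r N : ℤ) = q * N + r (N % p) :=
  Int.toNat_of_nonneg (zero_le_one.trans (one_le_mul_add_r hp hr1 hN))

theorem syracuseNum_ne_zero (hp : 0 < p) (hr1 : ∀ j, 1 ≤ j → j < p → 1 ≤ q * j + r j)
    {N : ℕ} (hN : ¬p ∣ N) : syracuseNum p q r N ≠ 0 := by
  rw [syracuseNum, Ne, Int.toNat_eq_zero, not_le]
  exact one_le_mul_add_r hp hr1 hN

theorem not_dvd_syracuse (hp : 1 < p) (hr1 : ∀ j, 1 ≤ j → j < p → 1 ≤ q * j + r j)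
    {N : ℕ} (hN : ¬p ∣ N) : ¬p ∣ syracuse p q r N :=
  Nat.not_dvd_divMaxPow hp (syracuseNum_ne_zero (Nat.zero_lt_of_lt hp) hr1 hN)

theorem dvd_mul_add_r_iff_modEq (hpq : Nat.Coprime p q)
    (hr2 : ∀ j, 1 ≤ j → j < p → (p : ℤ) ∣ q * j + r j) {j : ℕ} (hj1 : 1 ≤ j) (hjp : j < p)
    (x : ℕ) : (p : ℤ) ∣ q * x + r j ↔ x ≡ j [MOD p] := by
  have hcop : IsCoprime (p : ℤ) q := Nat.isCoprime_iff_coprime.mpr hpq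
  rw [show (q : ℤ) * x + r j = q * (x - j) + (q * j + r j) by ring, dvd_add_left (hr2 j hj1 hjp),
    Nat.ModEq.comm, Nat.modEq_iff_dvd]
  exact ⟨hcop.dvd_of_dvd_mul_left, (Dvd.dvd.mul_left · _)⟩

theorem not_dvd_and_eq_iff_mod_eq (hp : 0 < p) (hpq : Nat.Coprime p q)
    (hr2 : ∀ j, 1 ≤ j → j < p → (p : ℤ) ∣ q * j + r j) {j N : ℕ} (hj1 : 1 ≤ j) (hjp : j < p) :
    (¬p ∣ N ∧ r (N % p) = r j) ↔ N % p = j := by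
  constructor
  · rintro ⟨hN, hr⟩
    have hNp : 1 ≤ N % p := Nat.pos_of_ne_zero fun h => hN (Nat.dvd_of_mod_eq_zero h)
    have h := (dvd_mul_add_r_iff_modEq hpq hr2 hj1 hjp (N % p)).mp
      (hr ▸ hr2 _ hNp (Nat.mod_lt N hp))
    rwa [Nat.ModEq, Nat.mod_mod, Nat.mod_eq_of_lt hjp] at h
  · rintro rfl
    exact ⟨fun h => by rw [Nat.dvd_iff_mod_eq_zero] at h; omega, rfl⟩

theorem mem_syracuseCylinder_zero {av : ℕ → ℕ} {Rv : ℕ → ℤ} {N : ℕ} :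
    N ∈ syracuseCylinder p q r 0 av Rv ↔ ¬p ∣ N ∧ r (N % p) = Rv 0 := by
  simp [syracuseCylinder]

theorem mem_syracuseCylinder_succ (hp : 1 < p) (hr1 : ∀ j, 1 ≤ j → j < p → 1 ≤ q * j + r j)
    {k : ℕ} {av : ℕ → ℕ} {Rv : ℕ → ℤ} {N : ℕ} :
    N ∈ syracuseCylinder p q r (k + 1) av Rv ↔ ¬p ∣ N ∧ r (N % p) = Rv 0 ∧
      padicValNat p (syracuseNum p q r N) = av 0 ∧
      syracuse p q r N ∈ syracuseCylinder p q r k (fun i => av (i + 1)) (fun i => Rv (i + 1)) := by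
  simp only [syracuseCylinder, Set.mem_ofPred_eq, Nat.forall_lt_succ_left (n := k),
    Nat.forall_lt_succ_left (n := k + 1), Function.iterate_zero_apply, Function.iterate_succ_apply]
  constructor
  · rintro ⟨hN, ⟨ha0, ha⟩, hR0, hR⟩
    exact ⟨hN, hR0, ha0, not_dvd_syracuse hp hr1 hN, ha, hR⟩
  · rintro ⟨hN, hR0, ha0, -, ha, hR⟩
    exact ⟨hN, ⟨ha0, ha⟩, hR0, hR⟩

theorem exists_forall_syracuseNum_modEq_iff (hp : 0 < p) (hpq : Nat.Coprime p q)
    (hr1 : ∀ j, 1 ≤ j → j < p → 1 ≤ q * j + r j)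
    (hr2 : ∀ j, 1 ≤ j → j < p → (p : ℤ) ∣ q * j + r j) {j : ℕ} (hj1 : 1 ≤ j) (hjp : j < p)
    {e c : ℕ} (he : e ≠ 0) (hc : p ∣ c) :
    ∃ N₀, ∀ N, (N % p = j ∧ syracuseNum p q r N ≡ c [MOD p ^ e]) ↔ N ≡ N₀ [MOD p ^ e] := by
  obtain ⟨y, hy⟩ := Int.mod_coprime (hpq.pow_left e).symm
  obtain ⟨N₀, -, hN₀⟩ := Int.existsUnique_equiv_nat (y * (c - r j))
    (Int.natCast_pos.mpr (Nat.pow_pos hp))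
  have hqN₀ : (q * N₀ + r j : ℤ) ≡ c [ZMOD (p ^ e : ℕ)] :=
    calc (q * N₀ + r j : ℤ) ≡ q * (y * (c - r j)) + r j [ZMOD (p ^ e : ℕ)] :=
          (hN₀.mul_left _).add_right _
      _ = q * y * (c - r j) + r j := by ring
      _ ≡ 1 * (c - r j) + r j [ZMOD (p ^ e : ℕ)] := (hy.mul_right _).add_right _
      _ = c := by ring
  have hN₀j : N₀ % p = j := by
    have hdvd : (p : ℤ) ∣ q * N₀ + r j :=
      ((hqN₀.of_dvd (by exact_mod_cast dvd_pow_self p he)).dvd_iff).mpr (by exact_mod_cast hc)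
    have h := (dvd_mul_add_r_iff_modEq hpq hr2 hj1 hjp N₀).mp hdvd
    rwa [Nat.ModEq, Nat.mod_eq_of_lt hjp] at h
  have hmodEq_iff :
      ∀ N, N % p = j → (syracuseNum p q r N ≡ c [MOD p ^ e] ↔ N ≡ N₀ [MOD p ^ e]) := by
    intro N hNj
    have hN : ¬p ∣ N := fun h => by rw [Nat.dvd_iff_mod_eq_zero] at h; omega
    rw [← Int.natCast_modEq_iff, syracuseNum_cast hp hr1 hN, hNj]
    constructor
    · intro h
      have hq : ((q * N : ℕ) : ℤ) ≡ (q * N₀ : ℕ) [ZMOD (p ^ e : ℕ)] := by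
        push_cast; exact Int.ModEq.add_right_cancel' (r j) (h.trans hqN₀.symm)
      exact Nat.ModEq.cancel_left_of_coprime (hpq.pow_left e) (Int.natCast_modEq_iff.mp hq)
    · intro h
      exact (((Int.natCast_modEq_iff.mpr h).mul_left q).add_right (r j)).trans hqN₀
  refine ⟨N₀, fun N => ⟨fun ⟨hNj, hN⟩ => (hmodEq_iff N hNj).mp hN, fun h => ?_⟩⟩
  have hNj : N % p = j := Eq.trans (h.of_dvd (dvd_pow_self p he)) hN₀j
  exact ⟨hNj, (hmodEq_iff N hNj).mpr h⟩

theorem exists_forall_mem_syracuseCylinder_iff_modEq (hp : 1 < p) (hpq : Nat.Coprime p q)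
    (hr1 : ∀ j, 1 ≤ j → j < p → 1 ≤ q * j + r j)
    (hr2 : ∀ j, 1 ≤ j → j < p → (p : ℤ) ∣ q * j + r j) (k : ℕ) (av : ℕ → ℕ)
    (hav : ∀ i < k, 1 ≤ av i) (Rv : ℕ → ℤ) (hRv : ∀ i < k + 1, ∃ j, 1 ≤ j ∧ j < p ∧ Rv i = r j) :
    ∃ N₀, ∀ N, N ∈ syracuseCylinder p q r k av Rv ↔
      N ≡ N₀ [MOD p ^ ((∑ i ∈ range k, av i) + 1)] := by
  have hp0 : 0 < p := Nat.zero_lt_of_lt hp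
  induction k generalizing av Rv with
  | zero =>
    obtain ⟨j, hj1, hjp, hRv0⟩ := hRv 0 (by omega)
    refine ⟨j, fun N => ?_⟩
    rw [mem_syracuseCylinder_zero, hRv0, not_dvd_and_eq_iff_mod_eq hp0 hpq hr2 hj1 hjp]
    simp [Nat.ModEq, Nat.mod_eq_of_lt hjp]
  | succ k ih =>
    obtain ⟨M₀, hM₀⟩ := ih (fun i => av (i + 1)) (fun i hi => hav _ (by omega))
      (fun i => Rv (i + 1)) (fun i hi => hRv _ (by omega))
    obtain ⟨j, hj1, hjp, hRv0⟩ := hRv 0 (by omega)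
    have hM₀p : ¬p ∣ M₀ := ((hM₀ M₀).mpr rfl).1
    have hav0 : av 0 ≠ 0 := Nat.one_le_iff_ne_zero.mp (hav 0 k.succ_pos)
    have hsum : ∑ i ∈ range (k + 1), av i + 1 = av 0 + (∑ i ∈ range k, av (i + 1) + 1) := by
      rw [sum_range_succ']; omega
    obtain ⟨N₀, hN₀⟩ := exists_forall_syracuseNum_modEq_iff hp0 hpq hr1 hr2 hj1 hjp
      (by omega : av 0 + (∑ i ∈ range k, av (i + 1) + 1) ≠ 0)
      (dvd_mul_of_dvd_left (dvd_pow_self p hav0) M₀)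
    refine ⟨N₀, fun N => ?_⟩
    rw [hsum, ← hN₀, mem_syracuseCylinder_succ hp hr1, hRv0, ← and_assoc,
      not_dvd_and_eq_iff_mod_eq hp0 hpq hr2 hj1 hjp, hM₀]
    refine and_congr_right fun hNj => ?_
    have hN : ¬p ∣ N := by rw [Nat.dvd_iff_mod_eq_zero]; omega
    exact Nat.padicValNat_eq_and_divMaxPow_modEq_iff hp
      (syracuseNum_ne_zero hp0 hr1 hN) (Nat.succ_ne_zero _) hM₀p

end Syracuse

theorem stmt3_general (p q : ℕ) (hp : 2 ≤ p) (hpq : Nat.Coprime p q)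
    (r : ℕ → ℤ) (hr1 : ∀ j, 1 ≤ j → j < p → 1 ≤ q * j + r j)
    (hr2 : ∀ j, 1 ≤ j → j < p → (p : ℤ) ∣ q * j + r j)
    (S : ℕ → ℕ)
    (hS : ∀ N, S N = ((q * N : ℤ) + r (N % p)).toNat /
      p ^ (padicValNat p ((q * N : ℤ) + r (N % p)).toNat))
    (a : ℕ → ℕ → ℕ)
    (ha : ∀ i N, a i N = padicValNat p ((q * S^[i] N : ℤ) + r (S^[i] N % p)).toNat)
    (R : ℕ → ℕ → ℤ)
    (hR : ∀ i N, R i N = r (S^[i] N % p))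
    (k : ℕ) (av : ℕ → ℕ) (hav : ∀ i < k, 1 ≤ av i)
    (Rv : ℕ → ℤ) (hRv : ∀ i < k + 1, ∃ j, 1 ≤ j ∧ j < p ∧ Rv i = r j) :
    ∃ N₀ : ℕ, 1 ≤ N₀ ∧ ¬ p ∣ N₀ ∧
      ∀ N : ℕ, 1 ≤ N →
        (((¬ p ∣ N) ∧ (∀ i < k, a i N = av i) ∧ (∀ i < k + 1, R i N = Rv i)) ↔
          N % p ^ ((∑ i ∈ Finset.range k, av i) + 1)
            = N₀ % p ^ ((∑ i ∈ Finset.range k, av i) + 1)) := by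
  obtain rfl : S = syracuse p q r :=
    funext fun N => (hS N).trans (Nat.divMaxPow_eq_div_pow_padicValNat (by omega) _).symm
  obtain ⟨N₀, hN₀⟩ := exists_forall_mem_syracuseCylinder_iff_modEq hp hpq hr1 hr2 k av hav Rv hRv
  have hN₀p : ¬p ∣ N₀ := ((hN₀ N₀).mpr rfl).1
  refine ⟨N₀, Nat.pos_of_ne_zero fun h => hN₀p (h ▸ dvd_zero p), hN₀p, fun N _ => ?_⟩
  simp only [ha, hR]
  exact hN₀ N

/-- The set `E_k(a,R)` of inputs with prescribed valuation vector `a` and residue-value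
vector `R` is exactly one residue class modulo `p^{|a|+1}`. -/
theorem stmt3 (p q : ℕ) (hp : 2 ≤ p) (hq : 2 ≤ q) (hpq : Nat.Coprime p q)
    (r : ℕ → ℤ) (hr1 : ∀ j, 1 ≤ j → j < p → 1 ≤ q * j + r j)
    (hr2 : ∀ j, 1 ≤ j → j < p → (p : ℤ) ∣ q * j + r j)
    (S : ℕ → ℕ)
    (hS : ∀ N, S N = ((q * N : ℤ) + r (N % p)).toNat /
      p ^ (padicValNat p ((q * N : ℤ) + r (N % p)).toNat))
    (a : ℕ → ℕ → ℕ)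
    (ha : ∀ i N, a i N = padicValNat p ((q * S^[i] N : ℤ) + r (S^[i] N % p)).toNat)
    (R : ℕ → ℕ → ℤ)
    (hR : ∀ i N, R i N = r (S^[i] N % p))
    (k : ℕ) (av : ℕ → ℕ) (hav : ∀ i < k, 1 ≤ av i)
    (Rv : ℕ → ℤ) (hRv : ∀ i < k + 1, ∃ j, 1 ≤ j ∧ j < p ∧ Rv i = r j) :
    ∃ N₀ : ℕ, 1 ≤ N₀ ∧ ¬ p ∣ N₀ ∧
      ∀ N : ℕ, 1 ≤ N →
        (((¬ p ∣ N) ∧ (∀ i < k, a i N = av i) ∧ (∀ i < k + 1, R i N = Rv i)) ↔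
          N % p ^ ((∑ i ∈ Finset.range k, av i) + 1)
            = N₀ % p ^ ((∑ i ∈ Finset.range k, av i) + 1)) :=
  stmt3_general p q hp hpq r hr1 hr2 S hS a ha R hR k av hav Rv hRv
end

section
/- Let h ≥ 1 divide q and all values r(1),...,r(p-1), with gcd(p,q) = 1. Define r⋆ : {1,...,p-1} → ℤ by r⋆(j·h^{-1} mod p) = r(j)/h (well-defined since h is invertible mod p). Let C and C⋆ be the generalized Collatz maps with data (p,q,r) and (p,q,r⋆) respectively. Then C(hN) = h·C⋆(N) for all N ∈ ℕ; in particular C^k(hN) = h·(C⋆)^k(N) for all k ≥ 0. -/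
/-!
Since `h` is invertible mod `p`, `p ∣ hN ↔ p ∣ N` and `(hN mod p) · h⁻¹ ≡ N`. On multiples of `p`
both maps divide by `p`, which commutes with multiplication by `h`; otherwise
`q (hN) + r(hN mod p) = h (q N + r⋆(N mod p))` by the definition of `r⋆`, and truncation to `ℕ`
commutes with multiplication by `h`. So `N ↦ hN` semiconjugates `C⋆` to `C`, hence also their
iterates.
-/

def collatzMap (p q : ℕ) (r : ℕ → ℤ) (N : ℕ) : ℕ :=
  if N % p = 0 then N / p else ((q * N : ℤ) + r (N % p)).toNat

theorem Int.toNat_natCast_mul (h : ℕ) (x : ℤ) : ((h : ℤ) * x).toNat = h * x.toNat := by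
  rcases le_or_gt 0 x with hx | hx
  · rw [Int.toNat_mul (Int.natCast_nonneg h) hx, Int.toNat_natCast]
  · have hhx : (h : ℤ) * x ≤ 0 := mul_nonpos_of_nonneg_of_nonpos (Int.natCast_nonneg h) hx.le
    rw [Int.toNat_eq_zero.mpr hhx, Int.toNat_eq_zero.mpr hx.le, mul_zero]

namespace Nat

variable {p h h' : ℕ}

theorem coprime_of_mul_mod_eq_one (hh' : h * h' % p = 1) : h.Coprime p :=
  Nat.eq_one_of_dvd_one <| hh' ▸
    (Nat.dvd_mod_iff (Nat.gcd_dvd_right h p)).mpr ((Nat.gcd_dvd_left h p).mul_right h')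

theorem mul_mod_mul_inv_mod (hh' : h * h' % p = 1) (N : ℕ) : h * N % p * h' % p = N % p := by
  rw [Nat.mod_mul_mod, show h * N * h' = N * (h * h') by ring, Nat.mul_mod, hh', mul_one,
    Nat.mod_mod]

theorem mul_mod_ne_zero_of_mul_mod_eq_one (hh' : h * h' % p = 1) {N : ℕ} (hN : N % p ≠ 0) :
    h * N % p ≠ 0 := by
  rw [Ne, ← Nat.dvd_iff_mod_eq_zero] at hN ⊢
  exact fun hdvd => hN ((coprime_of_mul_mod_eq_one hh').symm.dvd_of_dvd_mul_left hdvd)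

end Nat

theorem collatzMap_mul {p q h h' : ℕ} {r rstar : ℕ → ℤ} (hp : 0 < p)
    (hhr : ∀ j, 1 ≤ j → j < p → (h : ℤ) ∣ r j) (hh' : h * h' % p = 1)
    (hrstar : ∀ j, 1 ≤ j → j < p → rstar (j * h' % p) = r j / h) (N : ℕ) :
    collatzMap p q r (h * N) = h * collatzMap p q rstar N := by
  by_cases hN : N % p = 0
  · have hpN : p ∣ N := Nat.dvd_of_mod_eq_zero hN
    have hhN : h * N % p = 0 := Nat.mod_eq_zero_of_dvd (hpN.mul_left h)
    simp only [collatzMap, if_pos hN, if_pos hhN, Nat.mul_div_assoc h hpN]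
  · have hhN := Nat.mul_mod_ne_zero_of_mul_mod_eq_one hh' hN
    set j := h * N % p with hj
    have hjp : 1 ≤ j ∧ j < p := ⟨Nat.one_le_iff_ne_zero.mpr hhN, Nat.mod_lt _ hp⟩
    obtain ⟨c, hc⟩ := hhr j hjp.1 hjp.2
    have hh : (h : ℤ) ≠ 0 := Int.natCast_ne_zero.mpr (by rintro rfl; simp at hh')
    have hrstar_N : rstar (N % p) = c := by
      rw [← Nat.mul_mod_mul_inv_mod hh' N, ← hj, hrstar j hjp.1 hjp.2, hc,
        Int.mul_ediv_cancel_left c hh]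
    simp only [collatzMap, if_neg hN, if_neg hhN, ← hj, hrstar_N, hc]
    rw [← Int.toNat_natCast_mul]
    congr 1
    push_cast
    ring

theorem stmt16_general (p q h : ℕ) (hp : 2 ≤ p)
    (r rstar : ℕ → ℤ)
    (hhr : ∀ j, 1 ≤ j → j < p → (h : ℤ) ∣ r j)
    (h' : ℕ) (hh' : h * h' % p = 1)
    (hrstar : ∀ j, 1 ≤ j → j < p → rstar (j * h' % p) = r j / h)
    (C Cstar : ℕ → ℕ)
    (hC : ∀ N, C N = if N % p = 0 then N / p else ((q * N : ℤ) + r (N % p)).toNat)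
    (hCstar : ∀ N, Cstar N = if N % p = 0 then N / p else ((q * N : ℤ) + rstar (N % p)).toNat) :
    ∀ N, 1 ≤ N → (C (h * N) = h * Cstar N ∧ ∀ k, C^[k] (h * N) = h * Cstar^[k] N) := by
  obtain rfl : C = collatzMap p q r := funext hC
  obtain rfl : Cstar = collatzMap p q rstar := funext hCstar
  have hconj : Function.Semiconj (h * ·) (collatzMap p q rstar) (collatzMap p q r) :=
    fun N => (collatzMap_mul (by omega) hhr hh' hrstar N).symm
  exact fun N _ => ⟨(hconj N).symm, fun k => ((hconj.iterate_right k) N).symm⟩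

/-- The conjugation identity: if `h` divides `q` and all values `r(j)`, and `r⋆` is
defined by `r⋆(j h⁻¹ mod p) = r(j)/h`, then `C(hN) = h C⋆(N)` and hence
`C^k(hN) = h (C⋆)^k(N)` for all `k`. -/
theorem stmt16 (p q h : ℕ) (hp : 2 ≤ p) (hq : 2 ≤ q) (hh : 1 ≤ h)
    (hpq : Nat.Coprime p q) (hhq : h ∣ q)
    (r rstar : ℕ → ℤ)
    (hr : ∀ j, 1 ≤ j → j < p → 1 ≤ q * j + r j)
    (hhr : ∀ j, 1 ≤ j → j < p → (h : ℤ) ∣ r j)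
    (h' : ℕ) (hh' : h * h' % p = 1)
    (hrstar : ∀ j, 1 ≤ j → j < p → rstar (j * h' % p) = r j / h)
    (C Cstar : ℕ → ℕ)
    (hC : ∀ N, C N = if N % p = 0 then N / p else ((q * N : ℤ) + r (N % p)).toNat)
    (hCstar : ∀ N, Cstar N = if N % p = 0 then N / p else ((q * N : ℤ) + rstar (N % p)).toNat) :
    ∀ N, 1 ≤ N → (C (h * N) = h * Cstar N ∧ ∀ k, C^[k] (h * N) = h * Cstar^[k] N) :=
  stmt16_general p q h hp r rstar hhr h' hh' hrstar C Cstar hC hCstar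
end
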